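/- Let F be a field, q ∈ F with q ≠ 0, and f, g ∈ F[h] with deg f ≥ 1. Then the lexicographical degree on H_q(f,g) is multiplicative: DEg(ab) = DEg a + DEg b for all a, b ∈ H_q(f,g). -/

import Mathlib

open Polynomial

/-- The three generators `x`, `y`, `h` of a quantum generalized Heisenberg algebra. -/
inductive QGHAGen : Type
  | x : QGHAGen
  | y : QGHAGen
  | h : QGHAGen

/-- The defining relations of the quantum generalized Heisenberg algebra `H_q(f,g)`:
`h*x = x*f(h)`, `y*h = f(h)*y`, and `y*x - q*(x*y) = g(h)`. -/
inductive QGHARel (F : Type*) [Field F] (q : F) (f g : F[X]) :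
    FreeAlgebra F QGHAGen → FreeAlgebra F QGHAGen → Prop
  | hx : QGHARel F q f g
      (FreeAlgebra.ι F QGHAGen.h * FreeAlgebra.ι F QGHAGen.x)
      (FreeAlgebra.ι F QGHAGen.x * aeval (FreeAlgebra.ι F QGHAGen.h) f)
  | yh : QGHARel F q f g
      (FreeAlgebra.ι F QGHAGen.y * FreeAlgebra.ι F QGHAGen.h)
      (aeval (FreeAlgebra.ι F QGHAGen.h) f * FreeAlgebra.ι F QGHAGen.y)
  | yx : QGHARel F q f g
      (FreeAlgebra.ι F QGHAGen.y * FreeAlgebra.ι F QGHAGen.x)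
      (q • (FreeAlgebra.ι F QGHAGen.x * FreeAlgebra.ι F QGHAGen.y)
        + aeval (FreeAlgebra.ι F QGHAGen.h) g)

/-- The quantum generalized Heisenberg algebra `H_q(f,g)`. -/
def QGHA (F : Type*) [Field F] (q : F) (f g : F[X]) : Type _ :=
  RingQuot (QGHARel F q f g)

namespace QGHA

variable {F : Type*} [Field F] (q : F) (f g : F[X])

instance : Ring (QGHA F q f g) :=
  inferInstanceAs (Ring (RingQuot (QGHARel F q f g)))

instance : Algebra F (QGHA F q f g) :=
  inferInstanceAs (Algebra F (RingQuot (QGHARel F q f g)))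

/-- The generator `x` of `H_q(f,g)`. -/
def x : QGHA F q f g :=
  RingQuot.mkAlgHom F (QGHARel F q f g) (FreeAlgebra.ι F QGHAGen.x)

/-- The generator `y` of `H_q(f,g)`. -/
def y : QGHA F q f g :=
  RingQuot.mkAlgHom F (QGHARel F q f g) (FreeAlgebra.ι F QGHAGen.y)

/-- The generator `h` of `H_q(f,g)`. -/
def h : QGHA F q f g :=
  RingQuot.mkAlgHom F (QGHARel F q f g) (FreeAlgebra.ι F QGHAGen.h)

end QGHA

/-- The lexicographical degree of an element of `H_q(f,g)`, computed with respect to a basis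
`B` of monomials `x^i h^j y^k`: it is the lexicographic maximum of the pairs `(i,k)` such
that some `x^i h^j y^k` occurs with nonzero coefficient, and `⊥` (i.e. `(−∞,−∞)`) for `0`. -/
noncomputable def QGHA.DEg {F : Type*} [Field F] {q : F} {f g : F[X]}
    (B : Module.Basis (ℕ × ℕ × ℕ) F (QGHA F q f g)) (a : QGHA F q f g) : WithBot (ℕ × ℕ) :=
  (((B.repr a).support.image (fun t => toLex (t.1, t.2.2))).max).map (fun z => ofLex z)

/-! The monomials `x^a h^j y^b` whose exponent pair `(a, b)` lies lexicographically below a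
bound span a filtration. The relations let polynomials in `h` pass `x` and `y` at the cost of
substituting `f` (`p(h) x^m = x^m (p ∘ f^{∘m})(h)`, `y^k p(h) = (p ∘ f^{∘k})(h) y^k`), and
`y^k x^m = q^{km} x^m y^k` modulo strictly lower terms; hence the filtration is multiplicative and
the leading part of `(x^i p(h) y^k) (x^m r(h) y^n)` is
`q^{km} x^{i+m} ((p ∘ f^{∘m}) (r ∘ f^{∘k}))(h) y^{k+n}`. Its coefficient is nonzero because
`q ≠ 0` and composing with the nonconstant `f` kills no nonzero polynomial. -/

section IterateComp

variable {F : Type*} [Semiring F] [NoZeroDivisors F] {f : F[X]}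

theorem iterate_comp_ne_zero (hf : 0 < f.degree) {p : F[X]} (hp : p ≠ 0) (m : ℕ) :
    (·.comp f)^[m] p ≠ 0 := by
  induction m with
  | zero => exact hp
  | succ m ih =>
    rw [Function.iterate_succ_apply']
    intro h0
    rcases comp_eq_zero_iff.mp h0 with h0 | ⟨-, hfC⟩
    · exact ih h0
    · exact (hfC ▸ hf).not_ge degree_C_le

end IterateComp

section Relations

variable {F R : Type*} [CommSemiring F] [Semiring R] [Algebra F R] {f g : F[X]} {q : F}
  {x h y : R}

theorem aeval_mul_x_eq (hx : h * x = x * aeval h f) (p : F[X]) :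
    aeval h p * x = x * aeval h (p.comp f) := by
  induction p using Polynomial.induction_on with
  | C c => simp [Algebra.commutes]
  | add p r hp hr => simp only [map_add, add_mul, mul_add, add_comp, hp, hr]
  | monomial n c ih =>
    rw [pow_succ, ← mul_assoc, map_mul, aeval_X, mul_assoc, hx, ← mul_assoc, ih]
    simp only [mul_comp, X_comp, map_mul, mul_assoc]

theorem aeval_mul_x_pow_eq (hx : h * x = x * aeval h f) (p : F[X]) (m : ℕ) :
    aeval h p * x ^ m = x ^ m * aeval h ((·.comp f)^[m] p) := by
  induction m generalizing p with
  | zero => simp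
  | succ m ih =>
    rw [pow_succ', ← mul_assoc, aeval_mul_x_eq hx, mul_assoc, ih, ← mul_assoc, ← pow_succ',
      Function.iterate_succ_apply]

theorem y_mul_aeval_eq (hy : y * h = aeval h f * y) (p : F[X]) :
    y * aeval h p = aeval h (p.comp f) * y := by
  induction p using Polynomial.induction_on with
  | C c => simp [Algebra.commutes]
  | add p r hp hr => simp only [map_add, add_mul, mul_add, add_comp, hp, hr]
  | monomial n c ih =>
    rw [pow_succ, ← mul_assoc, map_mul, aeval_X, ← mul_assoc, ih, mul_assoc, hy]
    simp only [mul_comp, X_comp, map_mul, mul_assoc]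

theorem y_pow_mul_aeval_eq (hy : y * h = aeval h f * y) (p : F[X]) (k : ℕ) :
    y ^ k * aeval h p = aeval h ((·.comp f)^[k] p) * y ^ k := by
  induction k generalizing p with
  | zero => simp
  | succ k ih =>
    rw [pow_succ, mul_assoc, y_mul_aeval_eq hy, ← mul_assoc, ih, mul_assoc, ← pow_succ,
      Function.iterate_succ_apply]

variable (F) in
def monomialSpan (x h y : R) (S : Set (Lex (ℕ × ℕ))) : Submodule F R :=
  Submodule.span F {v | ∃ a j b, toLex (a, b) ∈ S ∧ v = x ^ a * h ^ j * y ^ b}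

theorem monomialSpan_mono {S T : Set (Lex (ℕ × ℕ))} (hST : S ⊆ T) :
    monomialSpan F x h y S ≤ monomialSpan F x h y T :=
  Submodule.span_mono fun _ ⟨a, j, b, hab, hv⟩ => ⟨a, j, b, hST hab, hv⟩

theorem x_pow_mul_aeval_monomial_mul (a b n : ℕ) (c : F) :
    x ^ a * aeval h (monomial n c) * y ^ b = c • (x ^ a * h ^ n * y ^ b) := by
  rw [aeval_monomial, ← Algebra.smul_def, mul_smul_comm, smul_mul_assoc]

theorem monomial_mem_monomialSpan {S : Set (Lex (ℕ × ℕ))} {a b : ℕ} (hab : toLex (a, b) ∈ S)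
    (p : F[X]) : x ^ a * aeval h p * y ^ b ∈ monomialSpan F x h y S := by
  induction p using Polynomial.induction_on' with
  | add p r hp hr => rw [map_add, mul_add, add_mul]; exact add_mem hp hr
  | monomial n c =>
    rw [x_pow_mul_aeval_monomial_mul]
    exact Submodule.smul_mem _ c (Submodule.subset_span ⟨a, n, b, hab, rfl⟩)

theorem x_pow_mul_aeval_mul_mem (hx : h * x = x * aeval h f) {S T : Set (Lex (ℕ × ℕ))}
    {i : ℕ} (p : F[X]) (hST : ∀ a b, toLex (a, b) ∈ S → toLex (i + a, b) ∈ T) {u : R}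
    (hu : u ∈ monomialSpan F x h y S) : x ^ i * aeval h p * u ∈ monomialSpan F x h y T := by
  suffices monomialSpan F x h y S ≤
      (monomialSpan F x h y T).comap (LinearMap.mulLeft F (x ^ i * aeval h p)) from this hu
  refine Submodule.span_le.mpr ?_
  rintro _ ⟨a, j, b, hab, rfl⟩
  have hmul : x ^ i * aeval h p * (x ^ a * h ^ j * y ^ b) =
      x ^ (i + a) * aeval h ((·.comp f)^[a] p * X ^ j) * y ^ b := by
    rw [← mul_assoc, ← mul_assoc, mul_assoc (x ^ i), aeval_mul_x_pow_eq hx]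
    simp only [pow_add, map_mul, aeval_X_pow, mul_assoc]
  show x ^ i * aeval h p * (x ^ a * h ^ j * y ^ b) ∈ monomialSpan F x h y T
  exact hmul ▸ monomial_mem_monomialSpan (hST a b hab) _

theorem mul_aeval_mul_y_pow_mem (hy : y * h = aeval h f * y) {S T : Set (Lex (ℕ × ℕ))}
    {n : ℕ} (r : F[X]) (hST : ∀ a b, toLex (a, b) ∈ S → toLex (a, b + n) ∈ T) {u : R}
    (hu : u ∈ monomialSpan F x h y S) : u * (aeval h r * y ^ n) ∈ monomialSpan F x h y T := by
  suffices monomialSpan F x h y S ≤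
      (monomialSpan F x h y T).comap (LinearMap.mulRight F (aeval h r * y ^ n)) from this hu
  refine Submodule.span_le.mpr ?_
  rintro _ ⟨a, j, b, hab, rfl⟩
  have hmul : x ^ a * h ^ j * y ^ b * (aeval h r * y ^ n) =
      x ^ a * aeval h (X ^ j * (·.comp f)^[b] r) * y ^ (b + n) := by
    rw [mul_assoc, ← mul_assoc (y ^ b), y_pow_mul_aeval_eq hy]
    simp only [pow_add, map_mul, aeval_X_pow, mul_assoc]
  show x ^ a * h ^ j * y ^ b * (aeval h r * y ^ n) ∈ monomialSpan F x h y T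
  exact hmul ▸ monomial_mem_monomialSpan (hST a b hab) _

theorem y_mul_x_pow_eq (hx : h * x = x * aeval h f) (hyx : y * x = q • (x * y) + aeval h g)
    (m : ℕ) : ∃ t ∈ monomialSpan F x h y (Set.Iio (toLex (m, 0))),
      y * x ^ m = q ^ m • (x ^ m * y) + t := by
  induction m with
  | zero => exact ⟨0, zero_mem _, by simp⟩
  | succ m ih =>
    obtain ⟨t, ht, heq⟩ := ih
    refine ⟨q • (x * t) + x ^ m * aeval h ((·.comp f)^[m] g),
      add_mem (Submodule.smul_mem _ q ?_) ?_, ?_⟩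
    · have := x_pow_mul_aeval_mul_mem (T := Set.Iio (toLex (m + 1, 0))) (i := 1) hx 1
        (fun a b hab => by simp only [Set.mem_Iio, Prod.Lex.toLex_lt_toLex] at hab ⊢; omega) ht
      simpa using this
    · simpa using monomial_mem_monomialSpan (x := x) (h := h) (y := y) (b := 0)
        (S := Set.Iio (toLex (m + 1, 0))) (by simp [Prod.Lex.lt_iff]) ((·.comp f)^[m] g)
    · calc y * x ^ (m + 1) = (y * x) * x ^ m := by rw [pow_succ', mul_assoc]
        _ = q • (x * (y * x ^ m)) + aeval h g * x ^ m := by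
          rw [hyx, add_mul, smul_mul_assoc, mul_assoc]
        _ = _ := by
          rw [heq, aeval_mul_x_pow_eq hx, mul_add, mul_smul_comm, smul_add, smul_smul,
            ← pow_succ', ← mul_assoc, ← pow_succ', add_assoc]

theorem y_mul_mem (hx : h * x = x * aeval h f) (hy : y * h = aeval h f * y)
    (hyx : y * x = q • (x * y) + aeval h g) {m k : ℕ} {u : R}
    (hu : u ∈ monomialSpan F x h y (Set.Iio (toLex (m, k)))) :
    y * u ∈ monomialSpan F x h y (Set.Iio (toLex (m, k + 1))) := by
  suffices monomialSpan F x h y (Set.Iio (toLex (m, k))) ≤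
      (monomialSpan F x h y (Set.Iio (toLex (m, k + 1)))).comap (LinearMap.mulLeft F y) from
    this hu
  refine Submodule.span_le.mpr ?_
  rintro _ ⟨a, j, b, hab, rfl⟩
  obtain ⟨s, hs, hseq⟩ := y_mul_x_pow_eq hx hyx a
  have hmul : y * (x ^ a * h ^ j * y ^ b) =
      q ^ a • (x ^ a * aeval h ((X ^ j : F[X]).comp f) * y ^ (b + 1)) +
        s * (aeval h (X ^ j : F[X]) * y ^ b) := by
    calc y * (x ^ a * h ^ j * y ^ b) = (y * x ^ a) * (aeval h (X ^ j : F[X]) * y ^ b) := by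
          simp only [aeval_X_pow, mul_assoc]
      _ = _ := by
          rw [hseq, add_mul, smul_mul_assoc, mul_assoc, ← mul_assoc y, y_mul_aeval_eq hy]
          simp only [pow_succ', mul_assoc]
  simp only [Set.mem_Iio, Prod.Lex.toLex_lt_toLex] at hab
  show y * (x ^ a * h ^ j * y ^ b) ∈ monomialSpan F x h y (Set.Iio (toLex (m, k + 1)))
  rw [hmul]
  refine add_mem (Submodule.smul_mem _ _ (monomial_mem_monomialSpan ?_ _))
    (mul_aeval_mul_y_pow_mem hy _ (fun a' b' hab' => ?_) hs)
  · simp only [Set.mem_Iio, Prod.Lex.toLex_lt_toLex]; omega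
  · simp only [Set.mem_Iio, Prod.Lex.toLex_lt_toLex] at hab' ⊢; omega

theorem y_pow_mul_x_pow_eq (hx : h * x = x * aeval h f) (hy : y * h = aeval h f * y)
    (hyx : y * x = q • (x * y) + aeval h g) (k m : ℕ) :
    ∃ t ∈ monomialSpan F x h y (Set.Iio (toLex (m, k))),
      y ^ k * x ^ m = q ^ (k * m) • (x ^ m * y ^ k) + t := by
  induction k with
  | zero => exact ⟨0, zero_mem _, by simp⟩
  | succ k ih =>
    obtain ⟨t, ht, heq⟩ := ih
    obtain ⟨s, hs, hseq⟩ := y_mul_x_pow_eq hx hyx m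
    refine ⟨q ^ (k * m) • (s * y ^ k) + y * t,
      add_mem (Submodule.smul_mem _ _ ?_) (y_mul_mem hx hy hyx ht), ?_⟩
    · simpa using mul_aeval_mul_y_pow_mem (n := k) hy 1
        (fun a b hab => by simp only [Set.mem_Iio, Prod.Lex.toLex_lt_toLex] at hab ⊢; omega) hs
    · calc y ^ (k + 1) * x ^ m = y * (y ^ k * x ^ m) := by rw [pow_succ', mul_assoc]
        _ = q ^ (k * m) • ((y * x ^ m) * y ^ k) + y * t := by
          rw [heq, mul_add, mul_smul_comm, mul_assoc]
        _ = _ := by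
          rw [hseq, add_mul, smul_mul_assoc, smul_add, smul_smul, ← pow_add, mul_assoc,
            ← pow_succ', add_assoc, add_mul, one_mul]

theorem monomial_mul_monomial_eq (hx : h * x = x * aeval h f) (hy : y * h = aeval h f * y)
    (hyx : y * x = q • (x * y) + aeval h g) (i k m n : ℕ) (p r : F[X]) :
    ∃ t ∈ monomialSpan F x h y (Set.Iio (toLex (i + m, k + n))),
      (x ^ i * aeval h p * y ^ k) * (x ^ m * aeval h r * y ^ n) =
        x ^ (i + m) * aeval h (q ^ (k * m) • ((·.comp f)^[m] p * (·.comp f)^[k] r)) *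
          y ^ (k + n) + t := by
  obtain ⟨t, ht, heq⟩ := y_pow_mul_x_pow_eq hx hy hyx k m
  refine ⟨x ^ i * aeval h p * (t * (aeval h r * y ^ n)), ?_, ?_⟩
  · refine x_pow_mul_aeval_mul_mem (S := Set.Iio (toLex (m, k + n))) hx p
      (fun a b hab => ?_) (mul_aeval_mul_y_pow_mem hy r (fun a b hab => ?_) ht)
    all_goals simp only [Set.mem_Iio, Prod.Lex.toLex_lt_toLex] at hab ⊢; omega
  · calc (x ^ i * aeval h p * y ^ k) * (x ^ m * aeval h r * y ^ n)
        = x ^ i * aeval h p * (y ^ k * x ^ m) * (aeval h r * y ^ n) := by simp only [mul_assoc]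
      _ = q ^ (k * m) • (x ^ i * (aeval h p * x ^ m) * (y ^ k * aeval h r) * y ^ n) +
          x ^ i * aeval h p * (t * (aeval h r * y ^ n)) := by
        rw [heq]; simp only [mul_add, add_mul, mul_smul_comm, smul_mul_assoc, mul_assoc]
      _ = _ := by
        rw [aeval_mul_x_pow_eq hx, y_pow_mul_aeval_eq hy]
        simp only [map_smul, map_mul, pow_add, mul_assoc, mul_smul_comm, smul_mul_assoc]

theorem mul_mem_monomialSpan (hx : h * x = x * aeval h f) (hy : y * h = aeval h f * y)
    (hyx : y * x = q • (x * y) + aeval h g) {S₁ S₂ T : Set (Lex (ℕ × ℕ))} (hT : IsLowerSet T)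
    (hST : ∀ z₁ ∈ S₁, ∀ z₂ ∈ S₂, z₁ + z₂ ∈ T) {u v : R} (hu : u ∈ monomialSpan F x h y S₁)
    (hv : v ∈ monomialSpan F x h y S₂) : u * v ∈ monomialSpan F x h y T := by
  have huv := Submodule.mul_mem_mul hu hv
  rw [monomialSpan, monomialSpan, Submodule.span_mul_span] at huv
  refine Submodule.span_le.mpr ?_ huv
  rintro _ ⟨_, ⟨a, j, b, hab, rfl⟩, _, ⟨c, l, d, hcd, rfl⟩, rfl⟩
  obtain ⟨t, ht, heq⟩ := monomial_mul_monomial_eq hx hy hyx a b c d (X ^ j) (X ^ l)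
  simp only [aeval_X_pow] at heq
  show x ^ a * h ^ j * y ^ b * (x ^ c * h ^ l * y ^ d) ∈ monomialSpan F x h y T
  rw [heq]
  exact add_mem (monomial_mem_monomialSpan (hST _ hab _ hcd) _)
    (monomialSpan_mono (Set.Iio_subset_Iic_self.trans (hT.Iic_subset (hST _ hab _ hcd))) ht)

theorem exists_eq_monomial_add_of_mem {i k : ℕ} {u : R}
    (hu : u ∈ monomialSpan F x h y (Set.Iic (toLex (i, k)))) :
    ∃ (p : F[X]) (e : R), e ∈ monomialSpan F x h y (Set.Iio (toLex (i, k))) ∧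
      u = x ^ i * aeval h p * y ^ k + e := by
  induction hu using Submodule.span_induction with
  | mem v hv =>
    obtain ⟨a, j, b, hab, rfl⟩ := hv
    rcases (Set.mem_Iic.mp hab).eq_or_lt with hab | hab
    · obtain ⟨rfl, rfl⟩ := Prod.mk.inj (toLex.injective hab)
      exact ⟨X ^ j, 0, zero_mem _, by simp⟩
    · exact ⟨0, _, Submodule.subset_span ⟨a, j, b, hab, rfl⟩, by simp⟩
  | zero => exact ⟨0, 0, zero_mem _, by simp⟩
  | add u v _ _ hu hv =>
    obtain ⟨p, e, he, rfl⟩ := hu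
    obtain ⟨r, e', he', rfl⟩ := hv
    exact ⟨p + r, e + e', add_mem he he', by rw [map_add, mul_add, add_mul]; abel⟩
  | smul c u _ hu =>
    obtain ⟨p, e, he, rfl⟩ := hu
    exact ⟨c • p, c • e, Submodule.smul_mem _ c he,
      by rw [map_smul, smul_add, mul_smul_comm, smul_mul_assoc]⟩

theorem monomial_add_mul_monomial_add_eq (hx : h * x = x * aeval h f)
    (hy : y * h = aeval h f * y) (hyx : y * x = q • (x * y) + aeval h g) {i k m n : ℕ}
    (p r : F[X]) {e₁ e₂ : R} (he₁ : e₁ ∈ monomialSpan F x h y (Set.Iio (toLex (i, k))))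
    (he₂ : e₂ ∈ monomialSpan F x h y (Set.Iio (toLex (m, n)))) :
    ∃ e ∈ monomialSpan F x h y (Set.Iio (toLex (i + m, k + n))),
      (x ^ i * aeval h p * y ^ k + e₁) * (x ^ m * aeval h r * y ^ n + e₂) =
        x ^ (i + m) * aeval h (q ^ (k * m) • ((·.comp f)^[m] p * (·.comp f)^[k] r)) *
          y ^ (k + n) + e := by
  obtain ⟨t, ht, heq⟩ := monomial_mul_monomial_eq hx hy hyx i k m n p r
  have ha : x ^ i * aeval h p * y ^ k ∈ monomialSpan F x h y (Set.Iic (toLex (i, k))) :=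
    monomial_mem_monomialSpan (Set.mem_Iic.mpr le_rfl) p
  have hb : x ^ m * aeval h r * y ^ n + e₂ ∈ monomialSpan F x h y (Set.Iic (toLex (m, n))) :=
    add_mem (monomial_mem_monomialSpan (Set.mem_Iic.mpr le_rfl) r)
      (monomialSpan_mono Set.Iio_subset_Iic_self he₂)
  have hsum : toLex (i + m, k + n) = toLex (i, k) + toLex (m, n) := by
    rw [← toLex_add, Prod.mk_add_mk]
  refine ⟨t + x ^ i * aeval h p * y ^ k * e₂ + e₁ * (x ^ m * aeval h r * y ^ n + e₂),
    add_mem (add_mem ht ?_) ?_, by rw [add_mul, mul_add, heq]; abel⟩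
  · exact mul_mem_monomialSpan hx hy hyx (isLowerSet_Iio _)
      (fun _ h₁ _ h₂ => hsum ▸ Set.mem_Iio.mpr (add_lt_add_of_le_of_lt h₁ h₂)) ha he₂
  · exact mul_mem_monomialSpan hx hy hyx (isLowerSet_Iio _)
      (fun _ h₁ _ h₂ => hsum ▸ Set.mem_Iio.mpr (add_lt_add_of_lt_of_le h₁ h₂)) he₁ hb

end Relations

section LexDegree

variable {F R : Type*} [CommSemiring F] [Semiring R] [Algebra F R] {x h y : R}
  (B : Module.Basis (ℕ × ℕ × ℕ) F R)

noncomputable def lexDeg (u : R) : WithBot (Lex (ℕ × ℕ)) :=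
  ((B.repr u).support.image fun t => toLex (t.1, t.2.2)).max

variable {B}

theorem mem_monomialSpan_iff (hB : ∀ i j k, B (i, j, k) = x ^ i * h ^ j * y ^ k)
    {S : Set (Lex (ℕ × ℕ))} {u : R} :
    u ∈ monomialSpan F x h y S ↔ ∀ t ∈ (B.repr u).support, toLex (t.1, t.2.2) ∈ S := by
  have hspan : monomialSpan F x h y S = Submodule.span F (B '' {t | toLex (t.1, t.2.2) ∈ S}) := by
    refine congrArg (Submodule.span F) (Set.ext fun v => ⟨?_, ?_⟩)
    · rintro ⟨a, j, b, hab, rfl⟩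
      exact ⟨(a, j, b), hab, hB a j b⟩
    · rintro ⟨⟨a, j, b⟩, hab, rfl⟩
      exact ⟨a, j, b, hab, hB a j b⟩
  rw [hspan, B.mem_span_image]
  rfl

theorem lexDeg_le_iff (hB : ∀ i j k, B (i, j, k) = x ^ i * h ^ j * y ^ k)
    {u : R} {d : Lex (ℕ × ℕ)} : lexDeg B u ≤ d ↔ u ∈ monomialSpan F x h y (Set.Iic d) := by
  simp only [lexDeg, Finset.max_le_iff, Finset.forall_mem_image, WithBot.coe_le_coe,
    mem_monomialSpan_iff hB, Set.mem_Iic]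

theorem repr_monomial_apply (hB : ∀ i j k, B (i, j, k) = x ^ i * h ^ j * y ^ k)
    (a j b : ℕ) (p : F[X]) : B.repr (x ^ a * aeval h p * y ^ b) (a, j, b) = p.coeff j := by
  induction p using Polynomial.induction_on' with
  | add p r hp hr => rw [map_add, mul_add, add_mul, map_add, Finsupp.add_apply, hp, hr, coeff_add]
  | monomial n c =>
    rw [x_pow_mul_aeval_monomial_mul, ← hB, map_smul, B.repr_self, coeff_monomial]
    simp [Finsupp.single_apply]

theorem lexDeg_monomial_add (hB : ∀ i j k, B (i, j, k) = x ^ i * h ^ j * y ^ k)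
    {i k : ℕ} {p : F[X]} (hp : p ≠ 0) {e : R}
    (he : e ∈ monomialSpan F x h y (Set.Iio (toLex (i, k)))) :
    lexDeg B (x ^ i * aeval h p * y ^ k + e) = toLex (i, k) := by
  refine le_antisymm ((lexDeg_le_iff hB).mpr (add_mem
    (monomial_mem_monomialSpan (Set.mem_Iic.mpr le_rfl) p)
    (monomialSpan_mono Set.Iio_subset_Iic_self he))) ?_
  have he₀ : B.repr e (i, p.natDegree, k) = 0 := by
    by_contra hne
    exact lt_irrefl _ <| Set.mem_Iio.mp <|
      (mem_monomialSpan_iff hB).mp he _ (Finsupp.mem_support_iff.mpr hne)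
  have hmem : (i, p.natDegree, k) ∈ (B.repr (x ^ i * aeval h p * y ^ k + e)).support := by
    rw [Finsupp.mem_support_iff, map_add, Finsupp.add_apply, repr_monomial_apply hB, he₀,
      add_zero]
    exact mt leadingCoeff_eq_zero.mp hp
  exact Finset.le_max (Finset.mem_image_of_mem _ hmem)

theorem exists_eq_monomial_add (hB : ∀ i j k, B (i, j, k) = x ^ i * h ^ j * y ^ k)
    {u : R} (hu : u ≠ 0) :
    ∃ (i k : ℕ) (p : F[X]) (e : R), p ≠ 0 ∧
      e ∈ monomialSpan F x h y (Set.Iio (toLex (i, k))) ∧ u = x ^ i * aeval h p * y ^ k + e := by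
  obtain ⟨i, k, hd⟩ : ∃ i k : ℕ, lexDeg B u = toLex (i, k) := by
    obtain ⟨d, hd⟩ := Finset.max_of_nonempty
      ((Finsupp.support_nonempty_iff.mpr (B.repr.map_ne_zero_iff.mpr hu)).image
        fun t => toLex (t.1, t.2.2))
    exact ⟨(ofLex d).1, (ofLex d).2, hd⟩
  obtain ⟨p, e, he, rfl⟩ := exists_eq_monomial_add_of_mem ((lexDeg_le_iff hB).mp hd.le)
  refine ⟨i, k, p, e, ?_, he, rfl⟩
  rintro rfl
  obtain ⟨t, ht, htd⟩ := Finset.mem_image.mp (Finset.mem_of_max hd)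
  simp only [map_zero, mul_zero, zero_mul, zero_add] at ht
  exact lt_irrefl _ (Set.mem_Iio.mp (htd ▸ (mem_monomialSpan_iff hB).mp he t ht))

theorem lexDeg_mul [IsDomain F] {f g : F[X]} {q : F} (hx : h * x = x * aeval h f)
    (hy : y * h = aeval h f * y) (hyx : y * x = q • (x * y) + aeval h g) (hq : q ≠ 0)
    (hf : 0 < f.degree) (hB : ∀ i j k, B (i, j, k) = x ^ i * h ^ j * y ^ k) (a b : R) :
    lexDeg B (a * b) = lexDeg B a + lexDeg B b := by
  rcases eq_or_ne a 0 with rfl | ha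
  · simp [lexDeg]
  rcases eq_or_ne b 0 with rfl | hb
  · simp [lexDeg]
  obtain ⟨i, k, p, e₁, hp, he₁, rfl⟩ := exists_eq_monomial_add hB ha
  obtain ⟨m, n, r, e₂, hr, he₂, rfl⟩ := exists_eq_monomial_add hB hb
  obtain ⟨e, he, hmul⟩ := monomial_add_mul_monomial_add_eq hx hy hyx p r he₁ he₂
  have hlead : q ^ (k * m) • ((·.comp f)^[m] p * (·.comp f)^[k] r) ≠ 0 :=
    smul_ne_zero (pow_ne_zero _ hq)
      (mul_ne_zero (iterate_comp_ne_zero hf hp m) (iterate_comp_ne_zero hf hr k))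
  rw [hmul, lexDeg_monomial_add hB hlead he, lexDeg_monomial_add hB hp he₁,
    lexDeg_monomial_add hB hr he₂]
  rfl

end LexDegree

namespace QGHA

variable {F : Type*} [Field F] (q : F) (f g : F[X])

theorem h_mul_x : h q f g * x q f g = x q f g * aeval (h q f g) f := by
  have hrel := RingQuot.mkAlgHom_rel F (QGHARel.hx (q := q) (f := f) (g := g))
  simp only [map_mul, ← aeval_algHom_apply] at hrel
  exact hrel

theorem y_mul_h : y q f g * h q f g = aeval (h q f g) f * y q f g := by
  have hrel := RingQuot.mkAlgHom_rel F (QGHARel.yh (q := q) (f := f) (g := g))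
  simp only [map_mul, ← aeval_algHom_apply] at hrel
  exact hrel

theorem y_mul_x : y q f g * x q f g = q • (x q f g * y q f g) + aeval (h q f g) g := by
  have hrel := RingQuot.mkAlgHom_rel F (QGHARel.yx (q := q) (f := f) (g := g))
  simp only [map_mul, map_add, map_smul, ← aeval_algHom_apply] at hrel
  exact hrel

end QGHA

/-- If `q ≠ 0` and `deg f ≥ 1`, the lexicographical degree on `H_q(f,g)`
is multiplicative: `DEg (a*b) = DEg a + DEg b` for all `a, b` (with `⊥` playing the role of
`(−∞,−∞)`).  Here `B` is the basis of monomials `x^i h^j y^k`, which exists by Statement 2. -/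
theorem qgha_DEg_mul {F : Type*} [Field F] (q : F) (f g : F[X])
    (hq : q ≠ 0) (hf : 1 ≤ f.degree)
    (B : Module.Basis (ℕ × ℕ × ℕ) F (QGHA F q f g))
    (hB : ∀ i j k : ℕ, B (i, j, k) = QGHA.x q f g ^ i * QGHA.h q f g ^ j * QGHA.y q f g ^ k) :
    ∀ a b : QGHA F q f g, QGHA.DEg B (a * b) = QGHA.DEg B a + QGHA.DEg B b := by
  intro a b
  change (lexDeg B (a * b)).map ofLex = (lexDeg B a).map ofLex + (lexDeg B b).map ofLex
  rw [lexDeg_mul (QGHA.h_mul_x q f g) (QGHA.y_mul_h q f g) (QGHA.y_mul_x q f g) hq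
    (zero_lt_one.trans_le hf) hB]
  exact WithBot.map_add (ofLexAddEquiv (ℕ × ℕ)) _ _
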